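/- Let S = ⟨5, 6, 9⟩ be the numerical monoid generated by 5, 6 and 9. Then ω(S) < t(S), i.e., the omega invariant of S is strictly smaller than the tame degree of S. -/

import Mathlib

open scoped BigOperators

/-- `u` divides `x` in the additive submonoid of `ℕ` generated by `A`. -/
def dvdIn (A : Set ℕ) (u x : ℕ) : Prop :=
  ∃ c ∈ AddSubmonoid.closure A, u + c = x

/-- `ω(S,u)` for the numerical monoid `S` generated by `A`. -/
noncomputable def omegaNum (A : Set ℕ) (u : ℕ) : ℕ∞ :=
  sInf {N : ℕ∞ | ∀ (n : ℕ) (a : Fin n → ℕ), (∀ i, a i ∈ AddSubmonoid.closure A) →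
    dvdIn A u (∑ i, a i) →
    ∃ Ω : Finset (Fin n), (Ω.card : ℕ∞) ≤ N ∧ dvdIn A u (∑ i ∈ Ω, a i)}

/-- `ω(S)`: the supremum over the atoms (the generators in `A`). -/
noncomputable def omegaNumS (A : Set ℕ) : ℕ∞ :=
  ⨆ u ∈ A, omegaNum A u

/-- `z` is a factorization of `a`: a multiset of generators summing to `a`. -/
def NumFact (A : Set ℕ) (a : ℕ) (z : Multiset ℕ) : Prop :=
  (∀ v ∈ z, v ∈ A) ∧ z.sum = a

/-- Distance between factorizations. -/
def numDist (z z' : Multiset ℕ) : ℕ :=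
  max (Multiset.card (z - z')) (Multiset.card (z' - z))

/-- The tame degree `t(a,u)` in the numerical monoid generated by `A`. -/
noncomputable def tameNum (A : Set ℕ) (a u : ℕ) : ℕ∞ :=
  sInf {N : ℕ∞ | ∀ z : Multiset ℕ, NumFact A a z →
    (∃ z₀ : Multiset ℕ, NumFact A a z₀ ∧ u ∈ z₀) →
    ∃ z' : Multiset ℕ, NumFact A a z' ∧ u ∈ z' ∧ (numDist z z' : ℕ∞) ≤ N}

/-- The tame degree `t(S)` of the numerical monoid generated by `A`. -/
noncomputable def tameNumS (A : Set ℕ) : ℕ∞ :=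
  ⨆ u ∈ A, ⨆ a : ℕ, tameNum A a u

/-!
Nonzero elements of `S = ⟨5, 6, 9⟩` are at least `5`, so among five nonzero summands some four
have a sum `s ≥ 20` with `s ≠ 22` (if every four-term subsum were `22`, four times the total
would be `5 · 22`). The gaps of `S` are `1, 2, 3, 4, 7, 8, 13`, so `s - u ∈ S` for every atom `u`,
whence `ω(S) ≤ 4`. On the other hand `27 = 9 + 9 + 9`, and the only factorization of `27`
containing `5` is `5 + 5 + 5 + 6 + 6`, at distance `5`; hence `t(S) ≥ 5`.
-/

section General

variable {A : Set ℕ}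

theorem le_of_mem_closure {m x : ℕ} (hA : ∀ a ∈ A, m ≤ a)
    (hx : x ∈ AddSubmonoid.closure A) (hx0 : x ≠ 0) : m ≤ x := by
  suffices x = 0 ∨ m ≤ x by omega
  induction hx using AddSubmonoid.closure_induction with
  | mem y hy => exact .inr (hA y hy)
  | zero => exact .inl rfl
  | add y z _ _ hy hz => omega

theorem omegaNum_le_of_exists_subsum {u N : ℕ}
    (h : ∀ (n : ℕ) (a : Fin n → ℕ) (T : Finset (Fin n)),
      (∀ i ∈ T, a i ∈ AddSubmonoid.closure A ∧ a i ≠ 0) → T.card = N + 1 →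
      ∃ Ω ⊆ T, Ω.card ≤ N ∧ dvdIn A u (∑ i ∈ Ω, a i)) :
    omegaNum A u ≤ N := by
  classical
  refine sInf_le fun n a ha _ => ?_
  set T := Finset.univ.filter fun i => a i ≠ 0
  by_cases hT : T.card ≤ N
  · exact ⟨T, by exact_mod_cast hT, by rwa [Finset.sum_filter_ne_zero]⟩
  obtain ⟨T', hT'T, hT'⟩ := Finset.exists_subset_card_eq (show N + 1 ≤ T.card by omega)
  obtain ⟨Ω, -, hΩ, hΩdvd⟩ :=
    h n a T' (fun i hi => ⟨ha i, (Finset.mem_filter.1 (hT'T hi)).2⟩) hT'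
  exact ⟨Ω, by exact_mod_cast hΩ, hΩdvd⟩

theorem le_tameNum {a u N : ℕ} {z z₀ : Multiset ℕ} (hz : NumFact A a z)
    (hz₀ : NumFact A a z₀) (hu : u ∈ z₀)
    (h : ∀ z', NumFact A a z' → u ∈ z' → N ≤ numDist z z') :
    (N : ℕ∞) ≤ tameNum A a u :=
  le_sInf fun _ hM => by
    obtain ⟨z', hz', hu', hdist⟩ := hM z hz ⟨z₀, hz₀, hu⟩
    exact le_trans (by exact_mod_cast h z' hz' hu') hdist

end General

theorem Finset.exists_sum_erase_ne {ι : Type*} [DecidableEq ι] (T : Finset ι) (a : ι → ℕ)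
    (c : ℕ) (h : (T.card - 1) * ∑ i ∈ T, a i ≠ T.card * c) :
    ∃ j ∈ T, ∑ i ∈ T.erase j, a i ≠ c := by
  by_contra! hc
  have hsum : ∑ j ∈ T, (∑ i ∈ T.erase j, a i + a j) = T.card * ∑ i ∈ T, a i := by
    rw [Finset.sum_congr rfl fun j hj => Finset.sum_erase_add T a hj, Finset.sum_const,
      smul_eq_mul]
  rw [Finset.sum_add_distrib, Finset.sum_congr rfl hc, Finset.sum_const, smul_eq_mul] at hsum
  rw [Nat.sub_mul, one_mul] at h
  omega

local notation "S" => AddSubmonoid.closure ({5, 6, 9} : Set ℕ)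

theorem five_mul_add_six_mul_add_nine_mul_mem_S (a b c : ℕ) : 5 * a + 6 * b + 9 * c ∈ S := by
  have hmem : ∀ v ∈ ({5, 6, 9} : Set ℕ), v ∈ S := fun v hv => AddSubmonoid.subset_closure hv
  simp only [mul_comm _ (_ : ℕ), ← smul_eq_mul]
  exact add_mem (add_mem (nsmul_mem (hmem 5 (by simp)) a) (nsmul_mem (hmem 6 (by simp)) b))
    (nsmul_mem (hmem 9 (by simp)) c)

theorem mem_S_of_eleven_le {n : ℕ} (h11 : 11 ≤ n) (h13 : n ≠ 13) : n ∈ S := by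
  have : n % 5 < 5 := Nat.mod_lt n (by norm_num)
  interval_cases hr : n % 5
  · convert five_mul_add_six_mul_add_nine_mul_mem_S (n / 5) 0 0 using 1; omega
  · convert five_mul_add_six_mul_add_nine_mul_mem_S (n / 5 - 1) 1 0 using 1; omega
  · convert five_mul_add_six_mul_add_nine_mul_mem_S (n / 5 - 2) 2 0 using 1; omega
  · convert five_mul_add_six_mul_add_nine_mul_mem_S (n / 5 - 3) 0 2 using 1; omega
  · convert five_mul_add_six_mul_add_nine_mul_mem_S (n / 5 - 1) 0 1 using 1; omega

theorem dvdIn_of_twenty_le {u s : ℕ} (hu : u ∈ ({5, 6, 9} : Set ℕ)) (h20 : 20 ≤ s)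
    (h22 : s ≠ 22) : dvdIn {5, 6, 9} u s := by
  have hu' : u = 5 ∨ u = 6 ∨ u = 9 := by simpa using hu
  exact ⟨s - u, mem_S_of_eleven_le (by omega) (by omega), by omega⟩

theorem omegaNum_le_four {u : ℕ} (hu : u ∈ ({5, 6, 9} : Set ℕ)) :
    omegaNum {5, 6, 9} u ≤ 4 := by
  refine omegaNum_le_of_exists_subsum (N := 4) fun n a T ha hT => ?_
  have h5 : ∀ i ∈ T, 5 ≤ a i := fun i hi =>
    le_of_mem_closure (by simp only [Set.mem_insert_iff, Set.mem_singleton_iff]; omega)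
      (ha i hi).1 (ha i hi).2
  obtain ⟨j, hj, hne⟩ := T.exists_sum_erase_ne a 22 (by rw [hT]; omega)
  refine ⟨T.erase j, T.erase_subset j, by rw [Finset.card_erase_of_mem hj, hT], ?_⟩
  refine dvdIn_of_twenty_le hu ?_ hne
  have := (T.erase j).card_nsmul_le_sum a 5 fun i hi => h5 i (Finset.mem_of_mem_erase hi)
  rw [Finset.card_erase_of_mem hj, hT, smul_eq_mul] at this
  omega

theorem sum_eq_of_numFact {a : ℕ} {z : Multiset ℕ} (hz : NumFact {5, 6, 9} a z) :
    5 * z.count 5 + 6 * z.count 6 + 9 * z.count 9 = a := by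
  obtain ⟨hmem, rfl⟩ := hz
  rw [Finset.sum_multiset_count_of_subset z {5, 6, 9} fun v hv => by
    simpa using hmem v (Multiset.mem_toFinset.1 hv)]
  rw [Finset.sum_insert (by decide), Finset.sum_insert (by decide), Finset.sum_singleton]
  simp only [smul_eq_mul]
  omega

theorem numFact_27_eq_of_five_mem {z : Multiset ℕ} (hz : NumFact {5, 6, 9} 27 z) (h5 : 5 ∈ z) :
    z = {5, 5, 5, 6, 6} := by
  have hcount := sum_eq_of_numFact hz
  have h5' := Multiset.one_le_count_iff_mem.2 h5
  ext v
  by_cases hv : v ∈ ({5, 6, 9} : Set ℕ)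
  · simp only [Set.mem_insert_iff, Set.mem_singleton_iff] at hv
    rcases hv with rfl | rfl | rfl <;> simp [-Multiset.count_eq_zero] <;> omega
  · rw [Multiset.count_eq_zero.2 fun hvz => hv (hz.1 v hvz)]
    simp only [Set.mem_insert_iff, Set.mem_singleton_iff, not_or] at hv
    simp [hv]

theorem five_le_tameNum_27 : (5 : ℕ∞) ≤ tameNum {5, 6, 9} 27 5 := by
  refine le_tameNum (z := {9, 9, 9}) (z₀ := {5, 5, 5, 6, 6}) ⟨by simp, rfl⟩ ⟨by simp, rfl⟩
    (by simp) fun z' hz' h5 => ?_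
  rw [numFact_27_eq_of_five_mem hz' h5]
  decide

/-- for the numerical monoid `S = ⟨5,6,9⟩`, `ω(S) < t(S)`. -/
theorem omega_lt_tame_569 :
    omegaNumS {5, 6, 9} < tameNumS {5, 6, 9} :=
  calc omegaNumS {5, 6, 9} ≤ 4 := iSup₂_le fun _ hu => omegaNum_le_four hu
    _ < 5 := by norm_num
    _ ≤ tameNum {5, 6, 9} 27 5 := five_le_tameNum_27
    _ ≤ tameNumS {5, 6, 9} := le_iSup₂_of_le 5 (by simp) (le_iSup (tameNum {5, 6, 9} · 5) 27)
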